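/- arXiv:1601.00012 — 6 statements merged into one kernel-verified Lean document; each statement's English description precedes it below -/
import Mathlib

section
/- Let V be a real Hilbert space, K ⊆ V a nonempty closed convex subset, a : V × V → ℝ a continuous, symmetric, coercive bilinear form, and L : V → ℝ a continuous linear functional. Then there exists a unique u ∈ K such that a(u, v − u) ≥ L(v − u) for all v ∈ K. -/
/-!
A minimizer `w` over `K` of the energy `J v = a v v - 2 L v` satisfies the variational
inequality: by symmetry of `a`, with `h = v - w`,
`J (w + t h) = J w + 2 t (a w h - L h) + t² a h h`, and letting `t → 0⁺` gives the first-order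
condition. Coercivity bounds `J` below, and the parallelogram identity at the midpoint of
`x, y ∈ K` gives `λ ‖x - y‖² ≤ 2 (J x - d) + 2 (J y - d)` with `d = inf_K J`, so minimizing
sequences are Cauchy and converge in the closed set `K` to a minimizer. Adding the
inequalities of two solutions `u, u'` gives `a (u - u') (u - u') ≤ 0`, hence `u = u'` by coercivity.
-/

open Filter Topology Set

namespace LionsStampacchia

variable {V : Type*} [NormedAddCommGroup V] [NormedSpace ℝ V]
  (a : V →ₗ[ℝ] V →ₗ[ℝ] ℝ) (L : V →L[ℝ] ℝ)

def energy (v : V) : ℝ := a v v - 2 * L v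

theorem energy_add_energy (x y : V) :
    energy a L x + energy a L y = 2 * energy a L (midpoint ℝ x y) + 2⁻¹ * a (x - y) (x - y) := by
  simp only [energy, midpoint_eq_smul_add, invOf_eq_inv, map_add, map_sub, map_smul,
    LinearMap.add_apply, LinearMap.sub_apply, LinearMap.smul_apply, smul_eq_mul]
  ring

theorem energy_add_smul (ha_symm : ∀ u v, a u v = a v u) (w d : V) (t : ℝ) :
    energy a L (w + t • d) = energy a L w + 2 * t * (a w d - L d) + t ^ 2 * a d d := by
  simp only [energy, map_add, map_smul, LinearMap.add_apply, LinearMap.smul_apply, smul_eq_mul]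
  linear_combination t * ha_symm d w

variable {a}

theorem continuous_energy {C : ℝ} (hC : ∀ u v, |a u v| ≤ C * ‖u‖ * ‖v‖) :
    Continuous (energy a L) := by
  let A := a.mkContinuous₂ C (by simpa using hC)
  exact (A.continuous₂.comp (continuous_id.prodMk continuous_id)).sub
    (continuous_const.mul L.continuous)

theorem neg_sq_opNorm_div_le_energy {lam : ℝ} (hlam : 0 < lam)
    (hcoer : ∀ v, lam * ‖v‖ ^ 2 ≤ a v v) (v : V) : -(‖L‖ ^ 2 / lam) ≤ energy a L v := by
  unfold energy
  have hLv : L v ≤ ‖L‖ * ‖v‖ := (le_abs_self _).trans (L.le_opNorm v)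
  have hdiv : lam * (‖L‖ ^ 2 / lam) = ‖L‖ ^ 2 := by field_simp
  nlinarith [hcoer v, sq_nonneg (lam * ‖v‖ - ‖L‖)]

variable {L}

theorem lam_mul_norm_sub_sq_le {K : Set V} (hKcv : Convex ℝ K) {lam : ℝ}
    (hcoer : ∀ v, lam * ‖v‖ ^ 2 ≤ a v v) {d : ℝ} (hd : ∀ v ∈ K, d ≤ energy a L v)
    {x y : V} (hx : x ∈ K) (hy : y ∈ K) :
    lam * ‖x - y‖ ^ 2 ≤ 2 * (energy a L x - d) + 2 * (energy a L y - d) := by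
  have hmid := hd _ (hKcv.midpoint_mem hx hy)
  have hpar := energy_add_energy a L x y
  linarith [hcoer (x - y)]

theorem cauchySeq_of_tendsto_energy {K : Set V} (hKcv : Convex ℝ K) {lam : ℝ} (hlam : 0 < lam)
    (hcoer : ∀ v, lam * ‖v‖ ^ 2 ≤ a v v) {d : ℝ} (hd : ∀ v ∈ K, d ≤ energy a L v)
    {u : ℕ → V} (huK : ∀ n, u n ∈ K) (hu : Tendsto (fun n ↦ energy a L (u n)) atTop (𝓝 d)) :
    CauchySeq u := by
  let gap : ℕ × ℕ → ℝ := fun p ↦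
    (2 * (energy a L (u p.1) - d) + 2 * (energy a L (u p.2) - d)) / lam
  have hdist : ∀ p : ℕ × ℕ, dist (u p.1) (u p.2) ≤ √(gap p) := fun p ↦ by
    rw [dist_eq_norm]
    refine Real.le_sqrt_of_sq_le ?_
    rw [le_div_iff₀' hlam]
    exact lam_mul_norm_sub_sq_le hKcv hcoer hd (huK _) (huK _)
  have hgap : Tendsto gap atTop (𝓝 0) := by
    have h := ((((hu.comp tendsto_fst).sub_const d).const_mul 2).add
      (((hu.comp tendsto_snd).sub_const d).const_mul 2)).div_const lam
    rw [← prod_atTop_atTop_eq]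
    simpa using h
  rw [cauchySeq_iff_tendsto_dist_atTop_0]
  exact squeeze_zero (fun _ ↦ dist_nonneg) hdist (by simpa using hgap.sqrt)

theorem exists_isMinOn_energy [CompleteSpace V] {K : Set V} (hKne : K.Nonempty)
    (hKcl : IsClosed K) (hKcv : Convex ℝ K) {lam : ℝ} (hlam : 0 < lam)
    (hcoer : ∀ v, lam * ‖v‖ ^ 2 ≤ a v v) (hcont : Continuous (energy a L)) :
    ∃ u ∈ K, IsMinOn (energy a L) K u := by
  have hbdd : BddBelow (energy a L '' K) :=
    ⟨_, forall_mem_image.2 fun v _ ↦ neg_sq_opNorm_div_le_energy L hlam hcoer v⟩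
  set d := sInf (energy a L '' K)
  have hd : ∀ v ∈ K, d ≤ energy a L v := fun v hv ↦ csInf_le hbdd (mem_image_of_mem _ hv)
  obtain ⟨y, -, hy, hyK⟩ := exists_seq_tendsto_sInf (hKne.image _) hbdd
  choose u huK hu using hyK
  obtain rfl : (fun n ↦ energy a L (u n)) = y := funext hu
  obtain ⟨w, hw⟩ := cauchySeq_tendsto_of_complete
    (cauchySeq_of_tendsto_energy hKcv hlam hcoer hd huK hy)
  have hwd : energy a L w = d := tendsto_nhds_unique ((hcont.tendsto w).comp hw) hy
  exact ⟨w, hKcl.mem_of_tendsto hw (.of_forall huK), fun v hv ↦ hwd ▸ hd v hv⟩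

theorem variational_inequality_of_isMinOn_energy (ha_symm : ∀ u v, a u v = a v u) {K : Set V}
    (hKcv : Convex ℝ K) {w : V} (hw : w ∈ K) (hmin : IsMinOn (energy a L) K w)
    {v : V} (hv : v ∈ K) : L (v - w) ≤ a w (v - w) := by
  have hslope : ∀ t ∈ Ioc (0 : ℝ) 1,
      0 ≤ 2 * (a w (v - w) - L (v - w)) + t * a (v - w) (v - w) := by
    rintro t ⟨ht0, ht1⟩
    have hle := hmin (hKcv.add_smul_sub_mem hw hv ⟨ht0.le, ht1⟩)
    rw [mem_ofPred_eq, energy_add_smul a L ha_symm] at hle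
    nlinarith
  have hlim : Tendsto (fun t : ℝ ↦ 2 * (a w (v - w) - L (v - w)) + t * a (v - w) (v - w))
      (𝓝[>] 0) (𝓝 (2 * (a w (v - w) - L (v - w)))) :=
    tendsto_nhdsWithin_of_tendsto_nhds (Continuous.tendsto' (by fun_prop) _ _ (by simp))
  have hlimit := ge_of_tendsto hlim (eventually_of_mem (Ioc_mem_nhdsGT one_pos) hslope)
  linarith

theorem eq_of_variational_inequalities {lam : ℝ} (hlam : 0 < lam)
    (hcoer : ∀ v, lam * ‖v‖ ^ 2 ≤ a v v) {u u' : V}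
    (hu : L (u' - u) ≤ a u (u' - u)) (hu' : L (u - u') ≤ a u' (u - u')) : u = u' := by
  have hsum : a (u - u') (u - u') ≤ 0 := by
    simp only [map_sub, LinearMap.sub_apply] at hu hu' ⊢
    linarith
  have hnorm : ‖u - u'‖ ^ 2 = 0 := by nlinarith [hcoer (u - u'), sq_nonneg ‖u - u'‖]
  simpa [sub_eq_zero] using hnorm

end LionsStampacchia

open LionsStampacchia in
/-- Lions–Stampacchia: existence and uniqueness of the solution of an elliptic
variational inequality over a nonempty closed convex set. -/
theorem stmt1 {V : Type*} [NormedAddCommGroup V] [InnerProductSpace ℝ V] [CompleteSpace V]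
    (K : Set V) (hKne : K.Nonempty) (hKcl : IsClosed K) (hKcv : Convex ℝ K)
    (a : V →ₗ[ℝ] V →ₗ[ℝ] ℝ)
    (ha_cont : ∃ C : ℝ, ∀ u v : V, |a u v| ≤ C * ‖u‖ * ‖v‖)
    (ha_symm : ∀ u v : V, a u v = a v u)
    (lam : ℝ) (hlam : 0 < lam)
    (hcoer : ∀ v : V, lam * ‖v‖ ^ 2 ≤ a v v)
    (L : V →L[ℝ] ℝ) :
    ∃! u : V, u ∈ K ∧ ∀ v ∈ K, L (v - u) ≤ a u (v - u) := by
  obtain ⟨C, hC⟩ := ha_cont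
  obtain ⟨u, huK, hmin⟩ :=
    exists_isMinOn_energy hKne hKcl hKcv hlam hcoer (continuous_energy L hC)
  have hu : ∀ v ∈ K, L (v - u) ≤ a u (v - u) := fun v hv ↦
    variational_inequality_of_isMinOn_energy ha_symm hKcv huK hmin hv
  refine ⟨u, ⟨huK, hu⟩, ?_⟩
  rintro u' ⟨hu'K, hu'⟩
  exact eq_of_variational_inequalities hlam hcoer (hu' u huK) (hu u' hu'K)
end

section
/- Let V be a real Hilbert space, H a real Hilbert space with a continuous embedding j : V → H of norm ≤ c, K ⊆ V nonempty closed convex, and a a bilinear continuous coercive form on V with coercivity constant λ > 0. For g ∈ H, let u_g ∈ K denote the unique solution of the variational inequality a(u_g, v − u_g) ≥ ⟪g, j(v − u_g)⟫_H + L(v − u_g) for all v ∈ K, where L is a fixed continuous linear functional. Then for all g₁, g₂ ∈ H, ‖u_{g₂} − u_{g₁}‖_V ≤ (c/λ)‖g₂ − g₁‖_H. In particular the solution map g ↦ u_g is Lipschitz continuous. -/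
/-!
Subtracting the variational inequalities of `u_{g₁}` (tested with `v = u_{g₂}`) and of `u_{g₂}`
(tested with `v = u_{g₁}`) gives `a(w, w) ≤ ⟪g₂ - g₁, j w⟫` for `w = u_{g₂} - u_{g₁}`.
Coercivity bounds the left side below by `λ‖w‖²`, Cauchy–Schwarz and `‖j‖ ≤ c` bound the right
side by `c ‖g₂ - g₁‖ ‖w‖`, and dividing by `λ‖w‖` gives the estimate.
-/

open scoped RealInnerProductSpace

section VariationalInequality

variable {V : Type*} [AddCommGroup V] [Module ℝ V]

def IsVariationalIneqSol (a : V →ₗ[ℝ] V →ₗ[ℝ] ℝ) (K : Set V) (f : V →ₗ[ℝ] ℝ) (u : V) : Prop :=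
  u ∈ K ∧ ∀ v ∈ K, f (v - u) ≤ a u (v - u)

theorem IsVariationalIneqSol.apply_sub_sub_le {a : V →ₗ[ℝ] V →ₗ[ℝ] ℝ} {K : Set V}
    {f₁ f₂ : V →ₗ[ℝ] ℝ} {u₁ u₂ : V} (h₁ : IsVariationalIneqSol a K f₁ u₁)
    (h₂ : IsVariationalIneqSol a K f₂ u₂) :
    a (u₂ - u₁) (u₂ - u₁) ≤ f₂ (u₂ - u₁) - f₁ (u₂ - u₁) := by
  have test₁ := h₁.2 u₂ h₂.1
  have test₂ := h₂.2 u₁ h₁.1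
  rw [← neg_sub, map_neg, map_neg] at test₂
  simp only [map_sub, LinearMap.sub_apply] at test₁ test₂ ⊢
  linarith

end VariationalInequality

theorem le_div_of_mul_sq_le_mul {x lam M : ℝ} (hx : 0 ≤ x) (hlam : 0 < lam) (hM : 0 ≤ M)
    (h : lam * x ^ 2 ≤ M * x) : x ≤ M / lam := by
  rw [le_div_iff₀ hlam]
  rcases hx.eq_or_lt with rfl | hx
  · simpa using hM
  · nlinarith

theorem stmt2_general {V H : Type*}
    [NormedAddCommGroup V] [InnerProductSpace ℝ V]
    [NormedAddCommGroup H] [InnerProductSpace ℝ H]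
    (j : V →L[ℝ] H) (c : ℝ) (hc : 0 < c) (hj : ∀ v : V, ‖j v‖ ≤ c * ‖v‖)
    (K : Set V)
    (a : V →ₗ[ℝ] V →ₗ[ℝ] ℝ)
    (lam : ℝ) (hlam : 0 < lam)
    (hcoer : ∀ v : V, lam * ‖v‖ ^ 2 ≤ a v v)
    (L : V →L[ℝ] ℝ)
    (u : H → V)
    (hu : ∀ g : H, u g ∈ K ∧
      ∀ v ∈ K, ⟪g, j (v - u g)⟫ + L (v - u g) ≤ a (u g) (v - u g)) :
    ∀ g₁ g₂ : H, ‖u g₂ - u g₁‖ ≤ (c / lam) * ‖g₂ - g₁‖ := by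
  intro g₁ g₂
  let source (g : H) : V →ₗ[ℝ] ℝ := ((innerSL ℝ g).comp j + L : V →L[ℝ] ℝ)
  set w := u g₂ - u g₁
  have hvi : a w w ≤ ⟪g₂ - g₁, j w⟫ := by
    have h : a w w ≤ (⟪g₂, j w⟫ + L w) - (⟪g₁, j w⟫ + L w) :=
      IsVariationalIneqSol.apply_sub_sub_le (f₁ := source g₁) (f₂ := source g₂) (hu g₁) (hu g₂)
    rw [inner_sub_left]
    linarith
  have hbound : lam * ‖w‖ ^ 2 ≤ (c * ‖g₂ - g₁‖) * ‖w‖ := calc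
    lam * ‖w‖ ^ 2 ≤ a w w := hcoer w
    _ ≤ ⟪g₂ - g₁, j w⟫ := hvi
    _ ≤ ‖g₂ - g₁‖ * ‖j w‖ := real_inner_le_norm _ _
    _ ≤ ‖g₂ - g₁‖ * (c * ‖w‖) := by gcongr; exact hj w
    _ = (c * ‖g₂ - g₁‖) * ‖w‖ := by ring
  rw [div_mul_eq_mul_div]
  exact le_div_of_mul_sq_le_mul (norm_nonneg w) hlam (by positivity) hbound

/-- Lipschitz dependence of the variational inequality solution on the source term:
`‖u_{g₂} − u_{g₁}‖_V ≤ (c/λ) ‖g₂ − g₁‖_H`. -/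
theorem stmt2 {V H : Type*}
    [NormedAddCommGroup V] [InnerProductSpace ℝ V] [CompleteSpace V]
    [NormedAddCommGroup H] [InnerProductSpace ℝ H] [CompleteSpace H]
    (j : V →L[ℝ] H) (c : ℝ) (hc : 0 < c) (hj : ∀ v : V, ‖j v‖ ≤ c * ‖v‖)
    (K : Set V) (hKne : K.Nonempty) (hKcl : IsClosed K) (hKcv : Convex ℝ K)
    (a : V →ₗ[ℝ] V →ₗ[ℝ] ℝ)
    (ha_cont : ∃ C : ℝ, ∀ u v : V, |a u v| ≤ C * ‖u‖ * ‖v‖)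
    (lam : ℝ) (hlam : 0 < lam)
    (hcoer : ∀ v : V, lam * ‖v‖ ^ 2 ≤ a v v)
    (L : V →L[ℝ] ℝ)
    (u : H → V)
    (hu : ∀ g : H, u g ∈ K ∧
      ∀ v ∈ K, ⟪g, j (v - u g)⟫ + L (v - u g) ≤ a (u g) (v - u g)) :
    ∀ g₁ g₂ : H, ‖u g₂ - u g₁‖ ≤ (c / lam) * ‖g₂ - g₁‖ :=
  stmt2_general j c hc hj K a lam hlam hcoer L u hu
end

section
/- Let V be a real Hilbert space, a_α a continuous symmetric bilinear form on V that is coercive with constant λ_α > 0, K₊ ⊆ V closed convex, and K_h ⊆ K₊ a closed convex subset. Let u ∈ K₊ solve a_α(u, v − u) ≥ L(v − u) for all v ∈ K₊, and let u_h ∈ K_h solve a_α(u_h, v_h − u_h) ≥ L(v_h − u_h) for all v_h ∈ K_h, where L ∈ V*. Then for any w_h ∈ K_h, λ_α‖u_h − u‖² ≤ a_α(u_h − u, u_h − u) ≤ a_α(u_h, w_h − u) − L(w_h − u). Consequently, if there exist w_h ∈ K_h with ‖w_h − u‖ ≤ C h^{r−1} and ‖u_h‖ bounded uniformly, then ‖u_h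 − u‖ ≤ C' h^{(r−1)/2}. -/
/-! Testing the discrete inequality at `w_h` and the continuous one at `u_h ∈ K_h ⊆ K₊` and adding
them isolates `a_α(u_h − u, u_h − u)` on the left (Falk's argument); coercivity then bounds
`λ_α ‖u_h − u‖²` by `(‖a_α‖ ‖u_h‖ + ‖L‖) ‖w_h − u‖ = O(h^{r−1})`, and taking square roots gives
the rate `h^{(r−1)/2}`. -/

theorem falk_inequality {V : Type*} [AddCommGroup V] [Module ℝ V]
    (a : V →ₗ[ℝ] V →ₗ[ℝ] ℝ) (L : V →ₗ[ℝ] ℝ) {K Kh : Set V} (hKh : Kh ⊆ K) {u uh w : V}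
    (hu : ∀ v ∈ K, L (v - u) ≤ a u (v - u))
    (huh : uh ∈ Kh ∧ ∀ v ∈ Kh, L (v - uh) ≤ a uh (v - uh)) (hw : w ∈ Kh) :
    a (uh - u) (uh - u) ≤ a uh (w - u) - L (w - u) := by
  have hcont : L (uh - u) ≤ a u (uh - u) := hu uh (hKh huh.1)
  have hdisc : L (w - uh) ≤ a uh (w - uh) := huh.2 w hw
  have hsplit : w - u = (w - uh) + (uh - u) := by abel
  have hexpand : a (uh - u) (uh - u) = a uh (uh - u) - a u (uh - u) := by
    rw [map_sub a, LinearMap.sub_apply]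
  rw [hexpand, hsplit, map_add, map_add]
  linarith

theorem ContinuousLinearMap.sub_apply_le_norm_mul {V : Type*} [SeminormedAddCommGroup V]
    [NormedSpace ℝ V] (A : V →L[ℝ] V →L[ℝ] ℝ) (L : V →L[ℝ] ℝ) (x y : V) :
    A x y - L y ≤ (‖A‖ * ‖x‖ + ‖L‖) * ‖y‖ := by
  have hA : A x y ≤ ‖A‖ * ‖x‖ * ‖y‖ := (le_abs_self _).trans (A.le_opNorm₂ x y)
  have hL : -L y ≤ ‖L‖ * ‖y‖ := (neg_le_abs _).trans (L.le_opNorm y)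
  linarith

theorem le_sqrt_div_mul_rpow_half {lam M e h s : ℝ} (hlam : 0 < lam) (he : 0 ≤ e) (hh : 0 < h)
    (hbound : lam * e ^ 2 ≤ M * h ^ s) : e ≤ √(M / lam) * h ^ (s / 2) := by
  have hsq : e ^ 2 ≤ M / lam * h ^ s := by
    rw [div_mul_eq_mul_div, le_div_iff₀ hlam]
    linarith
  have hroot : √(h ^ s) = h ^ (s / 2) := by
    rw [Real.sqrt_eq_rpow, ← Real.rpow_mul hh.le, mul_one_div]
  calc e = √(e ^ 2) := (Real.sqrt_sq he).symm
    _ ≤ √(M / lam * h ^ s) := Real.sqrt_le_sqrt hsq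
    _ = √(M / lam) * h ^ (s / 2) := by
      rw [Real.sqrt_mul' _ (Real.rpow_nonneg hh.le s), hroot]

theorem stmt10_general {V : Type*} [NormedAddCommGroup V] [InnerProductSpace ℝ V]
    (aα : V →ₗ[ℝ] V →ₗ[ℝ] ℝ)
    (ha_cont : ∃ C : ℝ, ∀ u v : V, |aα u v| ≤ C * ‖u‖ * ‖v‖)
    (lamα : ℝ) (hlam : 0 < lamα)
    (hcoer : ∀ v : V, lamα * ‖v‖ ^ 2 ≤ aα v v)
    (Kp : Set V)
    (L : V →L[ℝ] ℝ)
    (u : V) (hu : u ∈ Kp ∧ ∀ v ∈ Kp, L (v - u) ≤ aα u (v - u))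
    (Kh : ℝ → Set V)
    (hKh : ∀ h : ℝ, 0 < h →
      (Kh h).Nonempty ∧ IsClosed (Kh h) ∧ Convex ℝ (Kh h) ∧ Kh h ⊆ Kp)
    (uh : ℝ → V)
    (huh : ∀ h : ℝ, 0 < h →
      uh h ∈ Kh h ∧ ∀ v ∈ Kh h, L (v - uh h) ≤ aα (uh h) (v - uh h))
    (r : ℝ) :
    (∀ h : ℝ, 0 < h → ∀ w ∈ Kh h,
        lamα * ‖uh h - u‖ ^ 2 ≤ aα (uh h - u) (uh h - u) ∧
        aα (uh h - u) (uh h - u) ≤ aα (uh h) (w - u) - L (w - u)) ∧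
    (∀ C : ℝ, 0 < C → (∀ h : ℝ, 0 < h → ‖uh h‖ ≤ C) →
      (∀ h : ℝ, 0 < h → ∃ w ∈ Kh h, ‖w - u‖ ≤ C * h ^ (r - 1)) →
      ∃ C' : ℝ, 0 < C' ∧ ∀ h : ℝ, 0 < h → ‖uh h - u‖ ≤ C' * h ^ ((r - 1) / 2)) := by
  have hfalk : ∀ h : ℝ, 0 < h → ∀ w ∈ Kh h,
      lamα * ‖uh h - u‖ ^ 2 ≤ aα (uh h - u) (uh h - u) ∧
      aα (uh h - u) (uh h - u) ≤ aα (uh h) (w - u) - L (w - u) := fun h hh w hw =>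
    ⟨hcoer _, falk_inequality aα L (hKh h hh).2.2.2 hu.2 (huh h hh) hw⟩
  refine ⟨hfalk, fun C hC hub happ => ?_⟩
  obtain ⟨Ca, hCa⟩ := ha_cont
  set A : V →L[ℝ] V →L[ℝ] ℝ := aα.mkContinuous₂ Ca hCa
  set M : ℝ := (‖A‖ * C + ‖L‖) * C
  refine ⟨√(M / lamα) + 1, by positivity, fun h hh => ?_⟩
  obtain ⟨w, hw, hwu⟩ := happ h hh
  have hbound : lamα * ‖uh h - u‖ ^ 2 ≤ M * h ^ (r - 1) :=
    calc lamα * ‖uh h - u‖ ^ 2 ≤ aα (uh h) (w - u) - L (w - u) :=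
          (hfalk h hh w hw).1.trans (hfalk h hh w hw).2
      _ ≤ (‖A‖ * ‖uh h‖ + ‖L‖) * ‖w - u‖ := A.sub_apply_le_norm_mul L (uh h) (w - u)
      _ ≤ (‖A‖ * C + ‖L‖) * (C * h ^ (r - 1)) := by gcongr; exact hub h hh
      _ = M * h ^ (r - 1) := by ring
  calc ‖uh h - u‖ ≤ √(M / lamα) * h ^ ((r - 1) / 2) :=
        le_sqrt_div_mul_rpow_half hlam (norm_nonneg _) hh hbound
    _ ≤ (√(M / lamα) + 1) * h ^ ((r - 1) / 2) := by
        gcongr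
        linarith

/-- Falk-type error estimate: the Céa–Falk inequality for variational inequalities,
and the resulting rate `‖u_h − u‖ ≤ C' h^{(r−1)/2}`. -/
theorem stmt10 {V : Type*} [NormedAddCommGroup V] [InnerProductSpace ℝ V] [CompleteSpace V]
    (aα : V →ₗ[ℝ] V →ₗ[ℝ] ℝ)
    (ha_cont : ∃ C : ℝ, ∀ u v : V, |aα u v| ≤ C * ‖u‖ * ‖v‖)
    (ha_symm : ∀ u v : V, aα u v = aα v u)
    (lamα : ℝ) (hlam : 0 < lamα)
    (hcoer : ∀ v : V, lamα * ‖v‖ ^ 2 ≤ aα v v)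
    (Kp : Set V) (hKpne : Kp.Nonempty) (hKpcl : IsClosed Kp) (hKpcv : Convex ℝ Kp)
    (L : V →L[ℝ] ℝ)
    (u : V) (hu : u ∈ Kp ∧ ∀ v ∈ Kp, L (v - u) ≤ aα u (v - u))
    (Kh : ℝ → Set V)
    (hKh : ∀ h : ℝ, 0 < h →
      (Kh h).Nonempty ∧ IsClosed (Kh h) ∧ Convex ℝ (Kh h) ∧ Kh h ⊆ Kp)
    (uh : ℝ → V)
    (huh : ∀ h : ℝ, 0 < h →
      uh h ∈ Kh h ∧ ∀ v ∈ Kh h, L (v - uh h) ≤ aα (uh h) (v - uh h))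
    (r : ℝ) (hr1 : 1 < r) (hr2 : r ≤ 2) :
    (∀ h : ℝ, 0 < h → ∀ w ∈ Kh h,
        lamα * ‖uh h - u‖ ^ 2 ≤ aα (uh h - u) (uh h - u) ∧
        aα (uh h - u) (uh h - u) ≤ aα (uh h) (w - u) - L (w - u)) ∧
    (∀ C : ℝ, 0 < C → (∀ h : ℝ, 0 < h → ‖uh h‖ ≤ C) →
      (∀ h : ℝ, 0 < h → ∃ w ∈ Kh h, ‖w - u‖ ≤ C * h ^ (r - 1)) →
      ∃ C' : ℝ, 0 < C' ∧ ∀ h : ℝ, 0 < h → ‖uh h - u‖ ≤ C' * h ^ ((r - 1) / 2)) :=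
  stmt10_general aα ha_cont lamα hlam hcoer Kp L u hu Kh hKh uh huh r
end

section
/- Let V be a real Hilbert space, a and ⟪·,·⟫_R continuous symmetric positive semidefinite bilinear forms with a₁ = a + ⟪·,·⟫_R coercive with constant λ₁ > 0. Fix L ∈ V* and b-compatible closed convex sets K₊ ⊇ K := {v ∈ K₊ : ⟪v − b₀, v − b₀⟫_R = 0} (nonempty), where b₀ ∈ K₊. For α > 1, let u_α ∈ K₊ solve a(u_α, v − u_α) + α⟪u_α − b₀, v − u_α⟫_R ≥ L(v − u_α) for all v ∈ K₊. Then there is a constant C independent of α such that ⟪u_α − b₀, u_α − b₀⟫_R ≤ C/(α − 1) and ‖u_α‖_V ≤ C for all α > 1. -/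
/-!
Test the penalized inequality with `v = b₀` and write `w = u_α - b₀`: this gives
`a(w,w) + α R(w,w) ≤ L w - a(b₀,w) ≤ M ‖w‖` with `M` independent of `α`. Splitting
`α = 1 + (α - 1)` and using coercivity of `a + R` yields `λ₁ ‖w‖² + (α - 1) R(w,w) ≤ M ‖w‖`,
whence `‖w‖ ≤ M / λ₁` and `(α - 1) R(w,w) ≤ M² / λ₁`.
-/

section PenalizedInequality

variable {V : Type*} [NormedAddCommGroup V] [NormedSpace ℝ V]

lemma penalized_energy_le_of_test_at_center (a R : V →ₗ[ℝ] V →ₗ[ℝ] ℝ) (L : V →L[ℝ] ℝ)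
    {α : ℝ} {u b₀ : V}
    (h : L (b₀ - u) ≤ a u (b₀ - u) + α * R (u - b₀) (b₀ - u)) :
    a (u - b₀) (u - b₀) + α * R (u - b₀) (u - b₀) ≤ L (u - b₀) - a b₀ (u - b₀) := by
  have hu : u = (u - b₀) + b₀ := (sub_add_cancel u b₀).symm
  rw [← neg_sub u b₀] at h
  nth_rewrite 2 [hu] at h
  simp only [map_neg, map_add, LinearMap.add_apply] at h
  linarith

lemma apply_sub_apply_le_mul_norm (a : V →ₗ[ℝ] V →ₗ[ℝ] ℝ) {Ca : ℝ}
    (hCa : ∀ u v : V, |a u v| ≤ Ca * ‖u‖ * ‖v‖) (L : V →L[ℝ] ℝ) (b₀ w : V) :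
    L w - a b₀ w ≤ (‖L‖ + |Ca| * ‖b₀‖) * ‖w‖ := by
  have hL : L w ≤ ‖L‖ * ‖w‖ := (le_abs_self _).trans (L.le_opNorm w)
  have ha : -a b₀ w ≤ |Ca| * ‖b₀‖ * ‖w‖ :=
    calc -a b₀ w ≤ |a b₀ w| := neg_le_abs _
      _ ≤ Ca * ‖b₀‖ * ‖w‖ := hCa b₀ w
      _ ≤ |Ca| * ‖b₀‖ * ‖w‖ := by gcongr; exact le_abs_self Ca
  linarith

end PenalizedInequality

lemma le_div_and_le_sq_div_of_mul_sq_add_le {lam M x r : ℝ} (hlam : 0 < lam) (hM : 0 ≤ M)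
    (hx : 0 ≤ x) (hr : 0 ≤ r) (h : lam * x ^ 2 + r ≤ M * x) :
    x ≤ M / lam ∧ r ≤ M ^ 2 / lam := by
  have hx_le : x ≤ M / lam := by
    rw [le_div_iff₀ hlam]
    rcases hx.eq_or_lt with rfl | hx_pos
    · simpa using hM
    · nlinarith
  refine ⟨hx_le, ?_⟩
  calc r ≤ M * x := by nlinarith
    _ ≤ M * (M / lam) := by gcongr
    _ = M ^ 2 / lam := by ring

theorem stmt13_general {V : Type*} [NormedAddCommGroup V] [InnerProductSpace ℝ V]
    (a R : V →ₗ[ℝ] V →ₗ[ℝ] ℝ)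
    (ha_cont : ∃ C : ℝ, ∀ u v : V, |a u v| ≤ C * ‖u‖ * ‖v‖)
    (hR_pos : ∀ v : V, 0 ≤ R v v)
    (lam1 : ℝ) (hlam1 : 0 < lam1)
    (hcoer : ∀ v : V, lam1 * ‖v‖ ^ 2 ≤ a v v + R v v)
    (L : V →L[ℝ] ℝ)
    (Kp : Set V)
    (b₀ : V) (hb₀ : b₀ ∈ Kp)
    (u : ℝ → V)
    (hu : ∀ α : ℝ, 1 < α → u α ∈ Kp ∧
      ∀ v ∈ Kp, L (v - u α) ≤ a (u α) (v - u α) + α * R (u α - b₀) (v - u α)) :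
    ∃ C : ℝ, 0 < C ∧ ∀ α : ℝ, 1 < α →
      R (u α - b₀) (u α - b₀) ≤ C / (α - 1) ∧ ‖u α‖ ≤ C := by
  obtain ⟨Ca, hCa⟩ := ha_cont
  set M := ‖L‖ + |Ca| * ‖b₀‖
  refine ⟨M ^ 2 / lam1 + M / lam1 + ‖b₀‖ + 1, by positivity, fun α hα => ?_⟩
  set w := u α - b₀
  have hα1 : 0 < α - 1 := by linarith
  have henergy : lam1 * ‖w‖ ^ 2 + (α - 1) * R w w ≤ M * ‖w‖ := by
    have := penalized_energy_le_of_test_at_center a R L ((hu α hα).2 b₀ hb₀)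
    have := apply_sub_apply_le_mul_norm a hCa L b₀ w
    linarith [hcoer w]
  obtain ⟨hw, hRw⟩ := le_div_and_le_sq_div_of_mul_sq_add_le hlam1 (by positivity) (norm_nonneg w)
    (mul_nonneg hα1.le (hR_pos w)) henergy
  refine ⟨?_, ?_⟩
  · rw [le_div_iff₀ hα1, mul_comm]
    linarith [div_nonneg (by positivity : 0 ≤ M) hlam1.le, norm_nonneg b₀]
  · calc ‖u α‖ = ‖w + b₀‖ := by rw [sub_add_cancel]
      _ ≤ ‖w‖ + ‖b₀‖ := norm_add_le _ _
      _ ≤ _ := by linarith [div_nonneg (sq_nonneg M) hlam1.le]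

/-- Uniform a priori estimates for the penalized variational inequalities:
`R(u_α−b₀, u_α−b₀) ≤ C/(α−1)` and `‖u_α‖ ≤ C` for all `α > 1`. -/
theorem stmt13 {V : Type*} [NormedAddCommGroup V] [InnerProductSpace ℝ V] [CompleteSpace V]
    (a R : V →ₗ[ℝ] V →ₗ[ℝ] ℝ)
    (ha_cont : ∃ C : ℝ, ∀ u v : V, |a u v| ≤ C * ‖u‖ * ‖v‖)
    (ha_symm : ∀ u v : V, a u v = a v u)
    (hR_cont : ∃ C : ℝ, ∀ u v : V, |R u v| ≤ C * ‖u‖ * ‖v‖)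
    (hR_symm : ∀ u v : V, R u v = R v u)
    (ha_pos : ∀ v : V, 0 ≤ a v v) (hR_pos : ∀ v : V, 0 ≤ R v v)
    (lam1 : ℝ) (hlam1 : 0 < lam1)
    (hcoer : ∀ v : V, lam1 * ‖v‖ ^ 2 ≤ a v v + R v v)
    (L : V →L[ℝ] ℝ)
    (Kp : Set V) (hKpcl : IsClosed Kp) (hKpcv : Convex ℝ Kp)
    (b₀ : V) (hb₀ : b₀ ∈ Kp)
    (hKne : {v ∈ Kp | R (v - b₀) (v - b₀) = 0}.Nonempty)
    (u : ℝ → V)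
    (hu : ∀ α : ℝ, 1 < α → u α ∈ Kp ∧
      ∀ v ∈ Kp, L (v - u α) ≤ a (u α) (v - u α) + α * R (u α - b₀) (v - u α)) :
    ∃ C : ℝ, 0 < C ∧ ∀ α : ℝ, 1 < α →
      R (u α - b₀) (u α - b₀) ≤ C / (α - 1) ∧ ‖u α‖ ≤ C :=
  stmt13_general a R ha_cont hR_pos lam1 hlam1 hcoer L Kp b₀ hb₀ u hu
end

section
/- Under the setup of the previous context, the solutions u_α of the penalized variational inequalities converge strongly in V, as α → ∞, to the unique solution u ∈ K of the limit variational inequality a(u, v − u) ≥ L(v − u) for all v ∈ K. -/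
/-!
The symmetry of `a` and `R` makes the penalized inequality a first-order condition: `u_α` minimizes
`J_α v = a(v,v)/2 + α/2 · R(v-b₀,v-b₀) - L v` over `K₊`, and, since `a + R` is coercive and
`α ≥ 1`, with a quadratic gap `λ₁/2 ‖v - u_α‖²`. The minimal values `J_α(u_α)` increase with `α`
and are bounded by `J(u) = a(u,u)/2 - L u`, so the gap makes `u_α` Cauchy. The penalty forces its
limit `w` into `K`, with `J(w) ≤ J(u)`; on `K - K` the form `R` vanishes, so `a` is coercive there
and the variational inequality for `u` gives `λ₁/2 ‖w - u‖² ≤ J(w) - J(u) ≤ 0`.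
-/

open Filter Topology

section Bilinear

variable {V : Type*} [AddCommGroup V] [Module ℝ V] (B : V →ₗ[ℝ] V →ₗ[ℝ] ℝ)

theorem bilin_add_add_of_symm (hB : ∀ x y, B x y = B y x) (x y : V) :
    B (x + y) (x + y) = B x x + 2 * B x y + B y y := by
  simp only [map_add, LinearMap.add_apply, hB y x]
  ring

theorem bilin_sub_sub_le_of_nonneg (hB : ∀ x, 0 ≤ B x x) (x y : V) :
    B (x - y) (x - y) ≤ 2 * (B x x + B y y) := by
  have h := hB (x + y)
  simp only [map_add, map_sub, LinearMap.add_apply, LinearMap.sub_apply] at h ⊢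
  linarith

theorem bilin_sub_sub_eq_zero_of_nonneg (hB : ∀ x, 0 ≤ B x x) {x y : V} (hx : B x x = 0)
    (hy : B y y = 0) : B (x - y) (x - y) = 0 :=
  le_antisymm (by simpa [hx, hy] using bilin_sub_sub_le_of_nonneg B hB x y) (hB _)

end Bilinear

theorem continuous_bilin_diag_of_bound {V : Type*} [NormedAddCommGroup V] [NormedSpace ℝ V]
    (B : V →ₗ[ℝ] V →ₗ[ℝ] ℝ) (hB : ∃ C : ℝ, ∀ u v : V, |B u v| ≤ C * ‖u‖ * ‖v‖) :
    Continuous fun v => B v v := by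
  obtain ⟨C, hC⟩ := hB
  let B' : V →L[ℝ] V →L[ℝ] ℝ := LinearMap.mkContinuous₂ B C fun u v => hC u v
  exact B'.isBoundedBilinearMap.continuous.comp (continuous_id.prodMk continuous_id)

theorem cauchySeq_of_add_mul_dist_sq_le {ι X : Type*} [LinearOrder ι] [NoMaxOrder ι]
    [PseudoMetricSpace X] {f : ι → X} {m : ι → ℝ} {t : ι} {M c : ℝ} (hc : 0 < c)
    (hM : ∀ i, t < i → m i ≤ M)
    (hgap : ∀ i j, t < i → i ≤ j → m i + c * dist (f i) (f j) ^ 2 ≤ m j) :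
    CauchySeq f := by
  have : Nonempty ι := ⟨t⟩
  have hne : (m '' Set.Ioi t).Nonempty := (Set.nonempty_Ioi).image m
  have hbdd : BddAbove (m '' Set.Ioi t) := ⟨M, by rintro _ ⟨i, hi, rfl⟩; exact hM i hi⟩
  rw [Metric.cauchySeq_iff']
  intro ε hε
  obtain ⟨_, ⟨N, hN, rfl⟩, hmN⟩ :=
    exists_lt_of_lt_csSup hne (sub_lt_self (sSup (m '' Set.Ioi t)) (by positivity : 0 < c * ε ^ 2))
  refine ⟨N, fun n hn => ?_⟩
  have hmn : m n ≤ sSup (m '' Set.Ioi t) := le_csSup hbdd ⟨n, hN.trans_le hn, rfl⟩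
  have hsq : c * dist (f N) (f n) ^ 2 < c * ε ^ 2 := by linarith [hgap N n hN hn]
  rw [dist_comm]
  exact lt_of_pow_lt_pow_left₀ 2 hε.le (lt_of_mul_lt_mul_left hsq hc.le)

section Energy

variable {V : Type*} [NormedAddCommGroup V] [NormedSpace ℝ V]
  (a R : V →ₗ[ℝ] V →ₗ[ℝ] ℝ) (L : V →L[ℝ] ℝ) (b₀ : V)

noncomputable def energy (v : V) : ℝ := a v v / 2 - L v

noncomputable def penalizedEnergy (α : ℝ) (v : V) : ℝ :=
  energy a L v + α / 2 * R (v - b₀) (v - b₀)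

variable {a R L b₀}

theorem energy_add (ha : ∀ u v, a u v = a v u) (u d : V) :
    energy a L (u + d) = energy a L u + (a u d - L d) + a d d / 2 := by
  rw [energy, energy, bilin_add_add_of_symm a ha, map_add]
  ring

theorem penalizedEnergy_add (ha : ∀ u v, a u v = a v u) (hR : ∀ u v, R u v = R v u) (α : ℝ)
    (u d : V) :
    penalizedEnergy a R L b₀ α (u + d) = penalizedEnergy a R L b₀ α u
      + (a u d + α * R (u - b₀) d - L d) + (a d d + α * R d d) / 2 := by
  have hshift : u + d - b₀ = (u - b₀) + d := by abel
  rw [penalizedEnergy, penalizedEnergy, energy_add ha, hshift, bilin_add_add_of_symm R hR]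
  ring

theorem energy_le_penalizedEnergy (hR_pos : ∀ v, 0 ≤ R v v) {α : ℝ} (hα : 0 ≤ α) (v : V) :
    energy a L v ≤ penalizedEnergy a R L b₀ α v := by
  unfold penalizedEnergy
  nlinarith [hR_pos (v - b₀)]

theorem penalizedEnergy_mono (hR_pos : ∀ v, 0 ≤ R v v) {p q : ℝ} (hpq : p ≤ q) (v : V) :
    penalizedEnergy a R L b₀ p v ≤ penalizedEnergy a R L b₀ q v := by
  unfold penalizedEnergy
  nlinarith [hR_pos (v - b₀)]

theorem penalizedEnergy_eq_energy {v : V} (hv : R (v - b₀) (v - b₀) = 0) (α : ℝ) :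
    penalizedEnergy a R L b₀ α v = energy a L v := by
  rw [penalizedEnergy, hv, mul_zero, add_zero]

theorem penalizedEnergy_add_sq_le_of_ineq (ha : ∀ u v, a u v = a v u)
    (hR : ∀ u v, R u v = R v u) (hR_pos : ∀ v, 0 ≤ R v v) {lam1 : ℝ}
    (hcoer : ∀ v, lam1 * ‖v‖ ^ 2 ≤ a v v + R v v) {α : ℝ} (hα : 1 ≤ α) {u v : V}
    (hvi : L (v - u) ≤ a u (v - u) + α * R (u - b₀) (v - u)) :
    penalizedEnergy a R L b₀ α u + lam1 / 2 * ‖v - u‖ ^ 2 ≤ penalizedEnergy a R L b₀ α v := by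
  have hexp := penalizedEnergy_add (L := L) (b₀ := b₀) ha hR α u (v - u)
  rw [add_sub_cancel] at hexp
  nlinarith [hcoer (v - u), mul_nonneg (sub_nonneg.mpr hα) (hR_pos (v - u))]

theorem continuous_energy (ha_cont : ∃ C : ℝ, ∀ u v : V, |a u v| ≤ C * ‖u‖ * ‖v‖) :
    Continuous (energy a L) :=
  ((continuous_bilin_diag_of_bound a ha_cont).div_const 2).sub L.continuous

theorem energy_le_of_tendsto (ha_cont : ∃ C : ℝ, ∀ u v : V, |a u v| ≤ C * ‖u‖ * ‖v‖)
    (hR_pos : ∀ v, 0 ≤ R v v) {u : ℝ → V} {w : V} (hw : Tendsto u atTop (𝓝 w)) {M : ℝ}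
    (hM : ∀ α, 1 < α → penalizedEnergy a R L b₀ α (u α) ≤ M) :
    energy a L w ≤ M := by
  have hE := continuous_energy (L := L) ha_cont
  refine le_of_tendsto ((hE.tendsto w).comp hw) ?_
  filter_upwards [eventually_gt_atTop 1] with α hα
  exact (energy_le_penalizedEnergy hR_pos (by linarith) _).trans (hM α hα)

theorem penalty_eq_zero_of_tendsto (ha_cont : ∃ C : ℝ, ∀ u v : V, |a u v| ≤ C * ‖u‖ * ‖v‖)
    (hR_cont : ∃ C : ℝ, ∀ u v : V, |R u v| ≤ C * ‖u‖ * ‖v‖) (hR_pos : ∀ v, 0 ≤ R v v)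
    {u : ℝ → V} {w : V} (hw : Tendsto u atTop (𝓝 w)) {M : ℝ}
    (hM : ∀ α, 1 < α → penalizedEnergy a R L b₀ α (u α) ≤ M) :
    R (w - b₀) (w - b₀) = 0 := by
  have hE := continuous_energy (L := L) ha_cont
  have hP : Continuous fun v => R (v - b₀) (v - b₀) :=
    (continuous_bilin_diag_of_bound R hR_cont).comp (continuous_id.sub continuous_const)
  have hbound : Tendsto (fun α : ℝ => 2 * α⁻¹ * (M - energy a L (u α))) atTop (𝓝 0) := by
    have h := (tendsto_inv_atTop_zero.const_mul 2).mul
      ((tendsto_const_nhds (x := M)).sub ((hE.tendsto w).comp hw))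
    rw [mul_zero, zero_mul] at h
    exact h
  refine le_antisymm (le_of_tendsto_of_tendsto ((hP.tendsto w).comp hw) hbound ?_) (hR_pos _)
  filter_upwards [eventually_gt_atTop 1] with α hα
  have hαpos : 0 < α := by linarith
  have h := hM α hα
  unfold penalizedEnergy at h
  rw [Function.comp_apply, mul_comm 2, mul_assoc, le_inv_mul_iff₀ hαpos]
  linarith

theorem eq_of_energy_le_of_ineq (ha : ∀ u v, a u v = a v u) (hR_pos : ∀ v, 0 ≤ R v v)
    {lam1 : ℝ} (hlam1 : 0 < lam1) (hcoer : ∀ v, lam1 * ‖v‖ ^ 2 ≤ a v v + R v v) {u w : V}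
    (hu : R (u - b₀) (u - b₀) = 0) (hw : R (w - b₀) (w - b₀) = 0)
    (hvi : L (w - u) ≤ a u (w - u)) (hle : energy a L w ≤ energy a L u) : w = u := by
  have hnull : R (w - u) (w - u) = 0 := by
    simpa using bilin_sub_sub_eq_zero_of_nonneg R hR_pos hw hu
  have hexp := energy_add (L := L) ha u (w - u)
  rw [add_sub_cancel] at hexp
  have hsq : lam1 * ‖w - u‖ ^ 2 ≤ 0 := by linarith [hcoer (w - u)]
  have : ‖w - u‖ ^ 2 = 0 := le_antisymm (nonpos_of_mul_nonpos_right hsq hlam1) (by positivity)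
  exact sub_eq_zero.mp (norm_eq_zero.mp (pow_eq_zero_iff two_ne_zero |>.mp this))

end Energy

theorem stmt14_general {V : Type*}
    [NormedAddCommGroup V] [InnerProductSpace ℝ V] [CompleteSpace V]
    (a R : V →ₗ[ℝ] V →ₗ[ℝ] ℝ)
    (ha_cont : ∃ C : ℝ, ∀ u v : V, |a u v| ≤ C * ‖u‖ * ‖v‖)
    (ha_symm : ∀ u v : V, a u v = a v u)
    (hR_cont : ∃ C : ℝ, ∀ u v : V, |R u v| ≤ C * ‖u‖ * ‖v‖)
    (hR_symm : ∀ u v : V, R u v = R v u)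
    (hR_pos : ∀ v : V, 0 ≤ R v v)
    (lam1 : ℝ) (hlam1 : 0 < lam1)
    (hcoer : ∀ v : V, lam1 * ‖v‖ ^ 2 ≤ a v v + R v v)
    (L : V →L[ℝ] ℝ)
    (Kp : Set V) (hKpcl : IsClosed Kp)
    (b₀ : V)
    (K : Set V) (hK : K = {v ∈ Kp | R (v - b₀) (v - b₀) = 0})
    (u : ℝ → V)
    (hu : ∀ α : ℝ, 1 < α → u α ∈ Kp ∧
      ∀ v ∈ Kp, L (v - u α) ≤ a (u α) (v - u α) + α * R (u α - b₀) (v - u α))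
    (ulim : V)
    (hulim : ulim ∈ K ∧ ∀ v ∈ K, L (v - ulim) ≤ a ulim (v - ulim)) :
    Tendsto u atTop (nhds ulim) := by
  subst hK
  obtain ⟨⟨hulKp, hul0⟩, hulvi⟩ := hulim
  have hineq {α : ℝ} (hα : 1 < α) {v : V} (hv : v ∈ Kp) :=
    penalizedEnergy_add_sq_le_of_ineq ha_symm hR_symm hR_pos hcoer hα.le ((hu α hα).2 v hv)
  have hbound (α : ℝ) (hα : 1 < α) : penalizedEnergy a R L b₀ α (u α) ≤ energy a L ulim := by
    have := hineq hα hulKp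
    rw [penalizedEnergy_eq_energy hul0] at this
    exact le_of_add_le_of_nonneg_left this (by positivity)
  have hgap (p q : ℝ) (hp : 1 < p) (hpq : p ≤ q) :
      penalizedEnergy a R L b₀ p (u p) + lam1 / 2 * dist (u p) (u q) ^ 2
        ≤ penalizedEnergy a R L b₀ q (u q) := by
    rw [dist_comm, dist_eq_norm]
    exact (hineq hp (hu q (hp.trans_le hpq)).1).trans (penalizedEnergy_mono hR_pos hpq _)
  obtain ⟨w, hw⟩ := cauchySeq_tendsto_of_complete
    (cauchySeq_of_add_mul_dist_sq_le (half_pos hlam1) hbound hgap)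
  have hwKp : w ∈ Kp :=
    hKpcl.mem_of_tendsto hw ((eventually_gt_atTop 1).mono fun α hα => (hu α hα).1)
  have hw0 := penalty_eq_zero_of_tendsto ha_cont hR_cont hR_pos hw hbound
  have hwu : w = ulim := eq_of_energy_le_of_ineq ha_symm hR_pos hlam1 hcoer hul0 hw0
    (hulvi w ⟨hwKp, hw0⟩) (energy_le_of_tendsto ha_cont hR_pos hw hbound)
  rwa [hwu] at hw

/-- Convergence of the penalized solutions `u_α` to the solution `u` of the limit
variational inequality on `K = {v ∈ K₊ : R(v−b₀,v−b₀) = 0}`, as `α → ∞`. -/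
theorem stmt14 {V H : Type*}
    [NormedAddCommGroup V] [InnerProductSpace ℝ V] [CompleteSpace V]
    [NormedAddCommGroup H] [InnerProductSpace ℝ H] [CompleteSpace H]
    (j : V →L[ℝ] H) (hjcompact : IsCompactOperator j)
    (a R : V →ₗ[ℝ] V →ₗ[ℝ] ℝ)
    (ha_cont : ∃ C : ℝ, ∀ u v : V, |a u v| ≤ C * ‖u‖ * ‖v‖)
    (ha_symm : ∀ u v : V, a u v = a v u)
    (hR_cont : ∃ C : ℝ, ∀ u v : V, |R u v| ≤ C * ‖u‖ * ‖v‖)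
    (hR_symm : ∀ u v : V, R u v = R v u)
    (ha_pos : ∀ v : V, 0 ≤ a v v) (hR_pos : ∀ v : V, 0 ≤ R v v)
    (lam1 : ℝ) (hlam1 : 0 < lam1)
    (hcoer : ∀ v : V, lam1 * ‖v‖ ^ 2 ≤ a v v + R v v)
    (L : V →L[ℝ] ℝ)
    (Kp : Set V) (hKpcl : IsClosed Kp) (hKpcv : Convex ℝ Kp)
    (b₀ : V) (hb₀ : b₀ ∈ Kp)
    (K : Set V) (hK : K = {v ∈ Kp | R (v - b₀) (v - b₀) = 0}) (hKne : K.Nonempty)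
    (u : ℝ → V)
    (hu : ∀ α : ℝ, 1 < α → u α ∈ Kp ∧
      ∀ v ∈ Kp, L (v - u α) ≤ a (u α) (v - u α) + α * R (u α - b₀) (v - u α))
    (ulim : V)
    (hulim : ulim ∈ K ∧ ∀ v ∈ K, L (v - ulim) ≤ a ulim (v - ulim))
    (huniq : ∀ w : V, w ∈ K ∧ (∀ v ∈ K, L (v - w) ≤ a w (v - w)) → w = ulim) :
    Tendsto u atTop (nhds ulim) :=
  stmt14_general a R ha_cont ha_symm hR_cont hR_symm hR_pos lam1 hlam1 hcoer L Kp hKpcl b₀ K hK u hu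
    ulim hulim
end

section
/- Let H be a real Hilbert space, S_{h,α} : H → H a family of maps for parameters h > 0, α > 0, and S : H → H, satisfying: (i) ‖S_{h,α}(g)‖ ≤ C uniformly in h, α, g ranging over bounded sets; (ii) if g_{h,α} ⇀ g* weakly in H and (h,α) → (0,∞) then S_{h,α}(g_{h,α}) → S(g*) strongly in H. Define J_{h,α}(g) = (1/2)‖S_{h,α}(g)‖² + (M/2)‖g‖² and J(g) = (1/2)‖S(g)‖² + (M/2)‖g‖² with M > 0, and suppose J has a unique minimizer g_op. If g_{h,α} is a minimizer of J_{h,α} for each (h,α), then g_{h,α} → g_op strongly in H and S_{h,α}(g_{h,α}) → S(g_op) strongly in H as (h,α) → (0,∞). -/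
open scoped RealInnerProductSpace
open Filter Topology

/-! Minimality against the fixed control `gop` bounds the discrete minimizers uniformly. Along any
sequence `(h, α) → (0, ∞)` a subsequence converges weakly to some `g`, hypothesis (ii) makes the
states converge, and comparing with `J_{h,α}(gop) → J(gop) ≤ J(g)` gives
`limsup ‖g_n‖² ≤ ‖g‖²`, so the convergence is strong. Passing to the limit in
`J_{h,α}(g_n) ≤ J_{h,α}(gop)` then shows that `g` minimizes `J`, hence `g = gop`; as every sequence
has such a subsequence, the whole family converges. -/

section

variable {H : Type*} [NormedAddCommGroup H]

noncomputable def regularizedCost (M : ℝ) (T : H → H) (g : H) : ℝ :=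
  1 / 2 * ‖T g‖ ^ 2 + M / 2 * ‖g‖ ^ 2

theorem tendsto_regularizedCost {ι : Type*} {l : Filter ι} (M : ℝ) {T : ι → H → H} {S : H → H}
    {x : ι → H} {g : H} (hT : Tendsto (fun i => T i (x i)) l (𝓝 (S g)))
    (hx : Tendsto x l (𝓝 g)) :
    Tendsto (fun i => regularizedCost M (T i) (x i)) l (𝓝 (regularizedCost M S g)) :=
  ((hT.norm.pow 2).const_mul _).add ((hx.norm.pow 2).const_mul _)

theorem norm_le_of_regularizedCost_le {M C : ℝ} (hM : 0 < M) {T T' : H → H} {g g₀ : H}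
    (h : regularizedCost M T g ≤ regularizedCost M T' g₀) (hC : ‖T' g₀‖ ≤ C) :
    ‖g‖ ≤ √(C ^ 2 / M + ‖g₀‖ ^ 2) := by
  rw [← abs_norm]
  refine Real.abs_le_sqrt ?_
  rw [div_add' _ _ _ hM.ne', le_div_iff₀ hM]
  have hC2 : ‖T' g₀‖ ^ 2 ≤ C ^ 2 := pow_le_pow_left₀ (norm_nonneg _) hC 2
  unfold regularizedCost at h
  nlinarith [sq_nonneg ‖T g‖]

variable [InnerProductSpace ℝ H]

def WeakTendsto {α : Type*} (f : α → H) (l : Filter α) (g : H) : Prop :=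
  ∀ v, Tendsto (fun a => ⟪f a, v⟫) l (𝓝 ⟪g, v⟫)

theorem exists_subseq_weakTendsto_of_norm_le [CompleteSpace H] (u : ℕ → H) {R : ℝ}
    (hu : ∀ n, ‖u n‖ ≤ R) :
    ∃ (g : H) (φ : ℕ → ℕ), StrictMono φ ∧ WeakTendsto (u ∘ φ) atTop g := by
  -- sequential Banach–Alaoglu in the separable closed span `K`, read back through Riesz
  set K := (Submodule.span ℝ (Set.range u)).topologicalClosure
  have : TopologicalSpace.SeparableSpace K := by
    apply TopologicalSpace.IsSeparable.separableSpace
    rw [Submodule.topologicalClosure_coe]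
    exact (Set.countable_range u).isSeparable.span.closure
  have : CompleteSpace K := (Submodule.isClosed_topologicalClosure _).completeSpace_coe
  have huK (n : ℕ) : u n ∈ K := Submodule.le_topologicalClosure _ (Submodule.subset_span ⟨n, rfl⟩)
  let f (n : ℕ) : WeakDual ℝ K := StrongDual.toWeakDual (innerSL ℝ (⟨u n, huK n⟩ : K))
  have hf (n : ℕ) : f n ∈ WeakDual.toStrongDual ⁻¹' Metric.closedBall 0 R := by
    change dist (innerSL ℝ (⟨u n, huK n⟩ : K)) 0 ≤ R
    rw [dist_zero_right]
    exact (innerSL_apply_norm ℝ _).trans_le (hu n)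
  obtain ⟨ℓ, -, φ, hφ, hlim⟩ := WeakDual.isSeqCompact_closedBall ℝ K 0 R hf
  refine ⟨(InnerProductSpace.toDual ℝ K).symm (WeakDual.toStrongDual ℓ), φ, hφ, fun v => ?_⟩
  have := (WeakDual.eval_continuous (K.orthogonalProjectionOnto v)).tendsto ℓ |>.comp hlim
  rw [← K.inner_orthogonalProjectionOnto_eq_of_mem_left, InnerProductSpace.toDual_symm_apply]
  simpa [f, Function.comp_def] using this

theorem tendsto_of_weakTendsto_of_norm_sq_le {x : ℕ → H} {x₀ : H} (hx : WeakTendsto x atTop x₀)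
    {a : ℕ → ℝ} {A : ℝ} (hxa : ∀ n, ‖x n‖ ^ 2 ≤ a n) (ha : Tendsto a atTop (𝓝 A))
    (hA : A ≤ ‖x₀‖ ^ 2) :
    Tendsto x atTop (𝓝 x₀) := by
  have hb : Tendsto (fun n => max (a n - 2 * ⟪x n, x₀⟫ + ‖x₀‖ ^ 2) 0) atTop (𝓝 0) := by
    have hlim : A - 2 * ‖x₀‖ ^ 2 + ‖x₀‖ ^ 2 ≤ 0 := by linarith
    have := ((ha.sub ((hx x₀).const_mul 2)).add_const (‖x₀‖ ^ 2)).max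
      (tendsto_const_nhds (x := (0 : ℝ)))
    rwa [real_inner_self_eq_norm_sq, max_eq_right hlim] at this
  have hsq : Tendsto (fun n => ‖x n - x₀‖ ^ 2) atTop (𝓝 0) := by
    refine squeeze_zero (fun n => by positivity) (fun n => le_max_of_le_left ?_) hb
    rw [norm_sub_sq_real]
    linarith [hxa n]
  rw [tendsto_iff_norm_sub_tendsto_zero]
  simpa using hsq.sqrt

open Classical in
theorem tendsto_cofinite_ite_mem_range {α X : Type*} [TopologicalSpace X] {z : ℕ → α}
    {u : α → X} {a : X} (h : Tendsto (u ∘ z) atTop (𝓝 a)) :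
    Tendsto (fun p => if p ∈ Set.range z then u p else a) cofinite (𝓝 a) := by
  intro U hU
  obtain ⟨N, hN⟩ := mem_atTop_sets.1 (h hU)
  refine mem_cofinite.2 (((Set.finite_Iio N).image z).subset fun p hp => ?_)
  by_cases hpz : p ∈ Set.range z
  · obtain ⟨m, rfl⟩ := hpz
    by_contra hm
    refine hp ?_
    rw [Set.mem_preimage, if_pos (Set.mem_range_self m)]
    exact hN m (not_lt.1 fun hmN => hm ⟨m, hmN, rfl⟩)
  · refine absurd ?_ hp
    rw [Set.mem_preimage, if_neg hpz]
    exact mem_of_mem_nhds hU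

theorem tendsto_along_seq_of_weakTendsto {α : Type*} {l : Filter α} (hl : l ≤ cofinite)
    {Shα : α → H → H} {S : H → H}
    (hstate : ∀ (g : α → H) (gs : H), WeakTendsto g l gs →
      Tendsto (fun p => Shα p (g p)) l (𝓝 (S gs)))
    {z : ℕ → α} (hz : Tendsto z atTop l) {f : α → H} {g : H} (hf : WeakTendsto (f ∘ z) atTop g) :
    Tendsto (fun n => Shα (z n) (f (z n))) atTop (𝓝 (S g)) := by
  classical
  -- `hstate` only speaks about families indexed by `α`: extend the sequence by its weak limit
  let G (p : α) : H := if p ∈ Set.range z then f p else g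
  have hG : WeakTendsto G l g := fun v => by
    simpa only [G, apply_ite (⟪·, v⟫)] using
      (tendsto_cofinite_ite_mem_range (u := (⟪f ·, v⟫)) (hf v)).mono_left hl
  have hGz (n : ℕ) : G (z n) = f (z n) := if_pos (Set.mem_range_self n)
  simpa only [Function.comp_def, hGz] using (hstate G g hG).comp hz

theorem exists_subseq_tendsto_of_minimizers [CompleteSpace H] {α : Type*} {l : Filter α}
    (hl : l ≤ cofinite) {Shα : α → H → H} {S : H → H}
    (hstate : ∀ (g : α → H) (gs : H), WeakTendsto g l gs →
      Tendsto (fun p => Shα p (g p)) l (𝓝 (S gs)))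
    {M : ℝ} (hM : 0 < M) {gmin : α → H} {R : ℝ} (hR : ∀ p, ‖gmin p‖ ≤ R)
    (hgmin : ∀ p g, regularizedCost M (Shα p) (gmin p) ≤ regularizedCost M (Shα p) g)
    {gop : H} (hgop : ∀ g, regularizedCost M S gop ≤ regularizedCost M S g)
    (huniq : ∀ g', (∀ g, regularizedCost M S g' ≤ regularizedCost M S g) → g' = gop)
    {z : ℕ → α} (hz : Tendsto z atTop l) :
    ∃ φ : ℕ → ℕ, Tendsto (fun n => gmin (z (φ n))) atTop (𝓝 gop) := by
  obtain ⟨g, φ, hφ, hweak⟩ := exists_subseq_weakTendsto_of_norm_le (gmin ∘ z) fun n => hR _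
  have hw : Tendsto (z ∘ φ) atTop l := hz.comp hφ.tendsto_atTop
  have hstate_gmin := tendsto_along_seq_of_weakTendsto hl hstate hw hweak
  have hcost_gop := tendsto_regularizedCost M
    (tendsto_along_seq_of_weakTendsto hl hstate hw (f := fun _ => gop) fun _ => tendsto_const_nhds)
    tendsto_const_nhds
  have hstrong : Tendsto (fun n => gmin (z (φ n))) atTop (𝓝 g) := by
    refine tendsto_of_weakTendsto_of_norm_sq_le hweak (fun n => ?_)
      ((hcost_gop.sub ((hstate_gmin.norm.pow 2).const_mul (1 / 2))).div_const (M / 2)) ?_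
    · rw [le_div_iff₀ (by positivity)]
      have := hgmin (z (φ n)) gop
      unfold regularizedCost at this ⊢
      simp only [Function.comp_apply]
      linarith
    · rw [div_le_iff₀ (by positivity)]
      have := hgop g
      unfold regularizedCost at this ⊢
      linarith
  have hg : g = gop := huniq g fun g' =>
    (le_of_tendsto_of_tendsto' (tendsto_regularizedCost M hstate_gmin hstrong) hcost_gop
      fun n => hgmin _ gop).trans (hgop g')
  exact ⟨φ, hg ▸ hstrong⟩

end

/-- Double convergence `(h, α) → (0⁺, ∞)` of the discrete optimal controls and
optimal states to the continuous ones (abstract form of Theorem 3.6). -/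
theorem stmt19 {H : Type*} [NormedAddCommGroup H] [InnerProductSpace ℝ H] [CompleteSpace H]
    (Shα : ℝ × ℝ → H → H) (S : H → H) (M : ℝ) (hM : 0 < M)
    (l : Filter (ℝ × ℝ)) (hl : l = (nhdsWithin 0 (Set.Ioi 0)) ×ˢ atTop)
    (hbdd : ∀ B : ℝ, ∃ C : ℝ, ∀ (p : ℝ × ℝ) (g : H), ‖g‖ ≤ B → ‖Shα p g‖ ≤ C)
    (hstate : ∀ (g : ℝ × ℝ → H) (gs : H),
      (∀ v : H, Tendsto (fun p => ⟪g p, v⟫) l (nhds ⟪gs, v⟫)) →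
      Tendsto (fun p => Shα p (g p)) l (nhds (S gs)))
    (Jhα : ℝ × ℝ → H → ℝ)
    (hJhα : ∀ (p : ℝ × ℝ) (g : H), Jhα p g = 1 / 2 * ‖Shα p g‖ ^ 2 + M / 2 * ‖g‖ ^ 2)
    (J : H → ℝ) (hJ : ∀ g : H, J g = 1 / 2 * ‖S g‖ ^ 2 + M / 2 * ‖g‖ ^ 2)
    (gop : H) (hgop : ∀ g : H, J gop ≤ J g)
    (hgopuniq : ∀ g' : H, (∀ g : H, J g' ≤ J g) → g' = gop)
    (gmin : ℝ × ℝ → H)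
    (hgmin : ∀ (p : ℝ × ℝ) (g : H), Jhα p (gmin p) ≤ Jhα p g) :
    Tendsto gmin l (nhds gop) ∧
    Tendsto (fun p => Shα p (gmin p)) l (nhds (S gop)) := by
  obtain rfl := hl
  obtain rfl : Jhα = fun p => regularizedCost M (Shα p) := funext₂ hJhα
  obtain rfl : J = regularizedCost M S := funext hJ
  have hcofinite : 𝓝[>] (0 : ℝ) ×ˢ (atTop : Filter ℝ) ≤ cofinite :=
    (tendsto_snd.mono_right atTop_le_cofinite).le_comap.trans (comap_cofinite_le _)
  obtain ⟨C, hC⟩ := hbdd ‖gop‖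
  have hbound (p : ℝ × ℝ) : ‖gmin p‖ ≤ √(C ^ 2 / M + ‖gop‖ ^ 2) :=
    norm_le_of_regularizedCost_le hM (hgmin p gop) (hC p gop le_rfl)
  have hconv : Tendsto gmin _ (𝓝 gop) := tendsto_of_subseq_tendsto fun _ hz =>
    exists_subseq_tendsto_of_minimizers hcofinite hstate hM hbound hgmin hgop hgopuniq hz
  exact ⟨hconv, hstate gmin gop fun v => hconv.inner tendsto_const_nhds⟩
end
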